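/- arXiv:1408.4042 — 2 statements merged into one kernel-verified Lean document; each statement's English description precedes it below -/
import Mathlib

section
/- Let G be a group containing a central element z of order 2 and a normal subgroup V = ⟨x,z⟩ isomorphic to (ℤ/2)^2 with G/V cyclic of order m a power of 2, generated by the image of g. If gxg⁻¹ = xz and g^m = 1, then g has order 2 and G is isomorphic to the dihedral group D_8 of order 8. -/
/-!
In `GL(2, ℂ)` the determinant of an involution is `±1`, and `-1` is the only nontrivial
involution of determinant one. Hence three independent commuting involutions cannot live in
`GL(2, ℂ)`: among the seven nontrivial elements they generate, two distinct ones would have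
determinant one.

If `m = 2 ^ k` with `k ≥ 2`, then `h = g ^ (m / 2)` is an involution outside `V = ⟨x, z⟩`,
and it commutes with `x` because `h * x * h⁻¹ = x * z ^ (m / 2) = x`; so `x, z, h` are
three such involutions. Thus `m = 2` and `g` is an involution. Then `g * x` squares to `z`,
so it has order 4, and `g` inverts it: `g` and `g * x` satisfy the relations of `D₈`, and
the resulting map `D₈ → G` is injective and, since `G = V ∪ gV`, surjective.
-/

namespace Matrix

variable {R : Type*} [CommRing R] [Nontrivial R]

theorem sq_sub_trace_smul_add_det_smul_fin_two (M : Matrix (Fin 2) (Fin 2) R) :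
    M ^ 2 - M.trace • M + M.det • (1 : Matrix (Fin 2) (Fin 2) R) = 0 := by
  simpa [charpoly_fin_two, Algebra.algebraMap_eq_smul_one] using M.aeval_self_charpoly

theorem eq_one_or_eq_neg_one_of_sq_eq_one_of_det_eq_one {K : Type*} [Field K]
    (h2 : (2 : K) ≠ 0) {M : Matrix (Fin 2) (Fin 2) K} (hM : M ^ 2 = 1) (hdet : M.det = 1) :
    M = 1 ∨ M = -1 := by
  have htr : M.trace • M = (2 : K) • (1 : Matrix (Fin 2) (Fin 2) K) := by
    have := M.sq_sub_trace_smul_add_det_smul_fin_two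
    rw [hM, hdet, one_smul] at this
    rw [two_smul]
    exact (sub_eq_zero.mp (by rw [← this]; abel)).symm
  have htr0 : M.trace ≠ 0 := by
    intro h
    exact h2 (by simpa [h] using (congr_fun₂ htr 0 0).symm)
  have hM_scalar : M = (2 / M.trace) • (1 : Matrix (Fin 2) (Fin 2) K) := by
    rw [div_eq_inv_mul, mul_smul, ← htr, smul_smul, inv_mul_cancel₀ htr0, one_smul]
  have hsq : (2 / M.trace) ^ 2 = 1 := by
    rw [hM_scalar, smul_pow, one_pow] at hM
    simpa using congr_fun₂ hM 0 0
  rcases sq_eq_one_iff.mp hsq with h | h <;> rw [hM_scalar, h] <;> simp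

end Matrix

section GeneralLinearGroup

open Function

variable {K G : Type*} [Field K] [Group G] (φ : G →* GL (Fin 2) K)

theorem det_eq_one_or_eq_neg_one_of_sq_eq_one {u : G} (hu : u ^ 2 = 1) :
    (φ u).val.det = 1 ∨ (φ u).val.det = -1 := by
  rw [← sq_eq_one_iff, ← Matrix.det_pow, ← Units.val_pow_eq_pow_val, ← map_pow, hu, map_one,
    Units.val_one, Matrix.det_one]

theorem exists_det_eq_one_of_sq_eq_one {a b : G} (ha : a ^ 2 = 1) (hb : b ^ 2 = 1) :
    ∃ c ∈ ({a, b, a * b} : Set G), (φ c).val.det = 1 := by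
  rcases det_eq_one_or_eq_neg_one_of_sq_eq_one φ ha with ha | ha
  · exact ⟨a, by simp, ha⟩
  rcases det_eq_one_or_eq_neg_one_of_sq_eq_one φ hb with hb | hb
  · exact ⟨b, by simp, hb⟩
  · exact ⟨a * b, by simp, by rw [map_mul, Units.val_mul, Matrix.det_mul, ha, hb]; ring⟩

theorem eq_of_sq_eq_one_of_det_eq_one (h2 : (2 : K) ≠ 0) (hφ : Injective φ) {u v : G}
    (hu : u ^ 2 = 1) (hv : v ^ 2 = 1) (hu1 : u ≠ 1) (hv1 : v ≠ 1)
    (hdu : (φ u).val.det = 1) (hdv : (φ v).val.det = 1) : u = v := by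
  suffices h : ∀ w : G, w ^ 2 = 1 → w ≠ 1 → (φ w).val.det = 1 → (φ w).val = -1 from
    hφ (Units.ext ((h u hu hu1 hdu).trans (h v hv hv1 hdv).symm))
  intro w hw hw1 hdw
  refine (Matrix.eq_one_or_eq_neg_one_of_sq_eq_one_of_det_eq_one h2 ?_ hdw).resolve_left ?_
  · rw [← Units.val_pow_eq_pow_val, ← map_pow, hw, map_one, Units.val_one]
  · exact fun h => hw1 (hφ (Units.ext (by rw [h, map_one, Units.val_one])))

theorem not_injective_of_commute_of_notMem_closure (h2 : (2 : K) ≠ 0) {x z h : G}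
    (hx : x ^ 2 = 1) (hz : z ^ 2 = 1) (hh : h ^ 2 = 1) (hx1 : x ≠ 1) (hz1 : z ≠ 1) (hxz : x ≠ z)
    (hcxz : Commute x z) (hcxh : Commute x h) (hczh : Commute z h)
    (hhV : h ∉ Subgroup.closure {x, z}) : ¬ Injective φ := by
  intro hφ
  set V := Subgroup.closure ({x, z} : Set G)
  have hxV : x ∈ V := Subgroup.subset_closure (by simp)
  have hzV : z ∈ V := Subgroup.subset_closure (by simp)
  have hh1 : h ≠ 1 := fun h1 => hhV (h1 ▸ V.one_mem)
  obtain ⟨u, hu, hdu⟩ := exists_det_eq_one_of_sq_eq_one φ hx hz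
  obtain ⟨huV, hu2, hu1⟩ : u ∈ V ∧ u ^ 2 = 1 ∧ u ≠ 1 := by
    rcases hu with rfl | rfl | rfl
    · exact ⟨hxV, hx, hx1⟩
    · exact ⟨hzV, hz, hz1⟩
    · refine ⟨V.mul_mem hxV hzV, by rw [hcxz.mul_pow, hx, hz, one_mul], fun h1 => hxz ?_⟩
      rw [eq_inv_of_mul_eq_one_left h1, ← one_mul z⁻¹, ← hz, sq, mul_inv_cancel_right]
  have huniq : ∀ v : G, v ^ 2 = 1 → (φ v).val.det = 1 → v = 1 ∨ v = u := fun v hv hdv =>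
    or_iff_not_imp_left.mpr fun hv1 => eq_of_sq_eq_one_of_det_eq_one φ h2 hφ hv hu2 hv1 hu1 hdv hdu
  obtain ⟨w, hwV, hw2, hw1, hwu, hcwh⟩ :
      ∃ w ∈ V, w ^ 2 = 1 ∧ w ≠ 1 ∧ w ≠ u ∧ Commute w h := by
    by_cases hux : u = x
    · exact ⟨z, hzV, hz, hz1, hux ▸ hxz.symm, hczh⟩
    · exact ⟨x, hxV, hx, hx1, Ne.symm hux, hcxh⟩
  have hwh : w * h ∉ V := fun hmem => hhV (by simpa using V.mul_mem (V.inv_mem hwV) hmem)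
  -- Some element of `{w, h, w * h}` has determinant one, yet none of them is `1` or `u`.
  obtain ⟨v, hv, hdv⟩ := exists_det_eq_one_of_sq_eq_one φ hw2 hh
  rcases hv with rfl | rfl | rfl
  · exact (huniq v hw2 hdv).elim hw1 hwu
  · exact (huniq v hh hdv).elim hh1 fun hvu => hhV (hvu ▸ huV)
  · refine (huniq _ (by rw [hcwh.mul_pow, hw2, hh, one_mul]) hdv).elim (fun h1 => hwh ?_)
      fun hvu => hwh (hvu ▸ huV)
    exact h1 ▸ V.one_mem

end GeneralLinearGroup

section ZModPow

variable {n : ℕ} [NeZero n] {G : Type*} [Group G]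

theorem pow_val_add_of_pow_eq_one {a : G} (ha : a ^ n = 1) (i j : ZMod n) :
    a ^ (i + j).val = a ^ i.val * a ^ j.val := by
  rw [ZMod.val_add, ← pow_add, ← pow_mod_orderOf, ← pow_mod_orderOf _ (_ + _),
    Nat.mod_mod_of_dvd _ (orderOf_dvd_of_pow_eq_one ha)]

theorem pow_val_sub_of_pow_eq_one {a : G} (ha : a ^ n = 1) (i j : ZMod n) :
    a ^ (j - i).val = (a ^ i.val)⁻¹ * a ^ j.val := by
  rw [eq_inv_mul_iff_mul_eq, ← pow_val_add_of_pow_eq_one ha, add_sub_cancel]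

end ZModPow

namespace DihedralGroup

open Function

variable {n : ℕ} [NeZero n] {G : Type*} [Group G]

def lift (a s : G) (ha : a ^ n = 1) (hs : s ^ 2 = 1) (hsa : s * a * s⁻¹ = a⁻¹) :
    DihedralGroup n →* G where
  toFun
    | r i => a ^ i.val
    | sr i => s * a ^ i.val
  map_one' := show a ^ (0 : ZMod n).val = 1 by rw [ZMod.val_zero, pow_zero]
  map_mul' := by
    have hss : s * s = 1 := by rw [← sq, hs]
    have hconj : ∀ k : ℕ, a ^ k * s = s * (a ^ k)⁻¹ := fun k => by
      rw [← inv_pow, ← hsa, conj_pow, inv_eq_of_mul_eq_one_left hss, ← mul_assoc,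
        ← mul_assoc, hss, one_mul]
    rintro (i | i) (j | j) <;>
      simp only [r_mul_r, r_mul_sr, sr_mul_r, sr_mul_sr, pow_val_add_of_pow_eq_one ha,
        pow_val_sub_of_pow_eq_one ha]
    · rw [← mul_assoc, ← hconj, mul_assoc]
    · rw [mul_assoc]
    · rw [mul_assoc s, ← mul_assoc (a ^ _), hconj, ← mul_assoc, ← mul_assoc, hss, one_mul]

@[simp] theorem lift_r {a s : G} (ha : a ^ n = 1) (hs : s ^ 2 = 1) (hsa : s * a * s⁻¹ = a⁻¹)
    (i : ZMod n) : lift a s ha hs hsa (r i) = a ^ i.val := rfl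

@[simp] theorem lift_sr {a s : G} (ha : a ^ n = 1) (hs : s ^ 2 = 1) (hsa : s * a * s⁻¹ = a⁻¹)
    (i : ZMod n) : lift a s ha hs hsa (sr i) = s * a ^ i.val := rfl

theorem lift_injective {a s : G} (ha : a ^ n = 1) (hs : s ^ 2 = 1) (hsa : s * a * s⁻¹ = a⁻¹)
    (hn : 2 < n) (hord : orderOf a = n) : Injective (lift a s ha hs hsa) := by
  rw [injective_iff_map_eq_one]
  rintro (i | i) h
  · rw [lift_r, ← orderOf_dvd_iff_pow_eq_one, hord] at h
    rw [Nat.eq_zero_of_dvd_of_lt h (ZMod.val_lt i) |> (ZMod.val_eq_zero i).mp, r_zero]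
  · rw [lift_sr] at h
    -- `s` would be a power of `a`, hence commute with `a`, forcing `a = a⁻¹`
    have hsa' : s * a * s⁻¹ = a := by
      rw [eq_inv_of_mul_eq_one_left h, ← zpow_natCast, ← zpow_neg,
        (Commute.zpow_left (Commute.refl a) _).eq, mul_inv_cancel_right]
    have : orderOf a ∣ 2 := orderOf_dvd_of_pow_eq_one (by
      rw [sq, ← inv_mul_cancel a, ← hsa, hsa'])
    exact absurd (Nat.le_of_dvd two_pos (hord ▸ this)) (by omega)

end DihedralGroup

theorem orderOf_mk_eq_natCard_quotient {G : Type*} [Group G] {N : Subgroup G} [N.Normal] {g : G}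
    (hgen : ∀ a : G, ∃ k : ℤ, a * (g ^ k)⁻¹ ∈ N) : orderOf (g : G ⧸ N) = Nat.card (G ⧸ N) := by
  have htop : Subgroup.zpowers (g : G ⧸ N) = ⊤ := by
    refine (Subgroup.eq_top_iff' _).mpr fun b => ?_
    induction b using QuotientGroup.induction_on with
    | H a =>
      obtain ⟨k, hk⟩ := hgen a
      exact ⟨k, (QuotientGroup.eq_iff_div_mem.mpr (by rwa [div_eq_mul_inv])).symm⟩
  rw [← Nat.card_zpowers, htop, Subgroup.card_top]

section ConjRelation

open Function

variable {G : Type*} [Group G] {x z g : G}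

theorem conj_pow_eq_mul_pow (hz : z ∈ Subgroup.center G) (hconj : g * x * g⁻¹ = x * z) (j : ℕ) :
    g ^ j * x * (g ^ j)⁻¹ = x * z ^ j := by
  induction j with
  | zero => simp
  | succ j ih =>
    calc g ^ (j + 1) * x * (g ^ (j + 1))⁻¹ = g * (g ^ j * x * (g ^ j)⁻¹) * g⁻¹ := by group
      _ = g * x * g⁻¹ * (g * z ^ j * g⁻¹) := by rw [ih]; group
      _ = x * z ^ (j + 1) := by
        rw [hconj, Subgroup.mem_center_iff.mp (Subgroup.pow_mem _ hz j), mul_inv_cancel_right,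
          pow_succ', mul_assoc]

theorem pow_mem_closure_of_even {K : Type*} [Field K] (φ : G →* GL (Fin 2) K)
    (hφ : Injective φ) (h2 : (2 : K) ≠ 0) (hz : z ∈ Subgroup.center G) (hz2 : z ^ 2 = 1)
    (hx2 : x ^ 2 = 1) (hx1 : x ≠ 1) (hz1 : z ≠ 1) (hxz : x ≠ z) (hconj : g * x * g⁻¹ = x * z)
    {n : ℕ} (hn : Even n) (hgn : g ^ (2 * n) = 1) : g ^ n ∈ Subgroup.closure {x, z} := by
  have hcz : ∀ a : G, Commute a z := fun a => Subgroup.mem_center_iff.mp hz a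
  have hzn : z ^ n = 1 := orderOf_dvd_iff_pow_eq_one.mp
    ((orderOf_dvd_of_pow_eq_one hz2).trans (even_iff_two_dvd.mp hn))
  have hcx : Commute x (g ^ n) := by
    have := conj_pow_eq_mul_pow hz hconj n
    rw [hzn, mul_one, mul_inv_eq_iff_eq_mul] at this
    exact this.symm
  by_contra hV
  exact not_injective_of_commute_of_notMem_closure φ h2 hx2 hz2
    (by rw [← pow_mul, mul_comm, hgn]) hx1 hz1 hxz (hcz x) hcx (hcz _).symm hV hφ

theorem nonempty_mulEquiv_dihedralGroup_four (hz : z ∈ Subgroup.center G) (hz2 : z ^ 2 = 1)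
    (hz1 : z ≠ 1) (hx2 : x ^ 2 = 1) (hg2 : g ^ 2 = 1) (hconj : g * x * g⁻¹ = x * z)
    (hgen : ∀ a : G, ∃ k : ℤ, a * (g ^ k)⁻¹ ∈ Subgroup.closure {x, z}) :
    Nonempty (G ≃* DihedralGroup 4) := by
  have hg : g⁻¹ = g := inv_eq_of_mul_eq_one_left (by rw [← sq, hg2])
  have hx : x⁻¹ = x := inv_eq_of_mul_eq_one_left (by rw [← sq, hx2])
  have ha2 : (g * x) ^ 2 = z :=
    calc (g * x) ^ 2 = g * x * g⁻¹ * x := by rw [sq, hg, ← mul_assoc]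
      _ = z := by rw [hconj, Subgroup.mem_center_iff.mp hz x, mul_assoc, ← sq, hx2, mul_one]
  have ha4 : (g * x) ^ 4 = 1 := by rw [show 4 = 2 * 2 from rfl, pow_mul, ha2, hz2]
  have hord : orderOf (g * x) = 4 :=
    orderOf_eq_prime_pow (p := 2) (n := 1) (by rwa [pow_one, ha2]) ha4
  have hsa : g * (g * x) * g⁻¹ = (g * x)⁻¹ := by
    rw [hg, ← mul_assoc, ← sq, hg2, one_mul, mul_inv_rev, hx, hg]
  let f := DihedralGroup.lift (n := 4) (g * x) g ha4 hg2 hsa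
  have hfV : Subgroup.closure {x, z} ≤ f.range := by
    rw [Subgroup.closure_le, Set.insert_subset_iff, Set.singleton_subset_iff]
    exact ⟨⟨.sr 1, show g * (g * x) ^ 1 = x by rw [pow_one, ← mul_assoc, ← sq, hg2, one_mul]⟩,
      ⟨.r 2, ha2⟩⟩
  have hgf : g ∈ f.range := ⟨.sr 0, by simp [f]⟩
  have hsurj : Surjective f := fun b => by
    obtain ⟨k, hk⟩ := hgen b
    simpa using f.range.mul_mem (hfV hk) (f.range.zpow_mem hgf k)
  exact ⟨(MulEquiv.ofBijective f ⟨DihedralGroup.lift_injective _ _ _ (by norm_num) hord,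
    hsurj⟩).symm⟩

end ConjRelation

/-- Let `G` be a group containing a central element `z` of order 2 and a normal subgroup
`V = ⟨x, z⟩ ≅ (ℤ/2)²` with `G/V` cyclic of order `m` a power of 2, generated by the image
of `g`.  Assume moreover that `G` embeds into `GL(2, ℂ)`.  If `g * x * g⁻¹ = x * z` and
`g ^ m = 1`, then `g` has order 2 and `G` is isomorphic to the dihedral group `D₈`
of order 8. -/
theorem dihedral_of_conj_relation_and_gm_eq_one
    {G : Type*} [Group G] (x z g : G) (m : ℕ)
    (hm2 : 2 ≤ m) (hmpow : ∃ k : ℕ, m = 2 ^ k)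
    (hz : z ∈ Subgroup.center G) (hzo : orderOf z = 2)
    (hxo : orderOf x = 2) (hxz : x ≠ z)
    (hnorm : (Subgroup.closure ({x, z} : Set G)).Normal)
    (hgen : ∀ a : G, ∃ k : ℤ, a * (g ^ k)⁻¹ ∈ Subgroup.closure ({x, z} : Set G))
    (hcard : Nat.card (G ⧸ Subgroup.closure ({x, z} : Set G)) = m)
    (φ : G →* Matrix.GeneralLinearGroup (Fin 2) ℂ) (hφ : Function.Injective φ)
    (hconj : g * x * g⁻¹ = x * z) (hgm : g ^ m = 1) :
    orderOf g = 2 ∧ Nonempty (G ≃* DihedralGroup 4) := by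
  obtain ⟨hx2, hx1⟩ := orderOf_eq_prime_iff.mp hxo
  obtain ⟨hz2, hz1⟩ := orderOf_eq_prime_iff.mp hzo
  have hgV : ∀ n, 0 < n → n < m → g ^ n ∉ Subgroup.closure {x, z} := fun n hn hnm hmem =>
    pow_ne_one_of_lt_orderOf hn.ne' (by rwa [orderOf_mk_eq_natCard_quotient hgen, hcard])
      (QuotientGroup.eq_one_iff (g ^ n) |>.mpr hmem)
  obtain ⟨k, rfl⟩ := hmpow
  obtain rfl : k = 1 := by
    by_contra hk
    obtain ⟨j, rfl⟩ : ∃ j, k = j + 2 := ⟨k - 2, by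
      have := Nat.one_lt_two_pow_iff.mp hm2
      omega⟩
    refine hgV (2 ^ (j + 1)) (by positivity) (Nat.pow_lt_pow_right one_lt_two (by omega)) ?_
    exact pow_mem_closure_of_even φ hφ two_ne_zero hz hz2 hx2 hx1 hz1 hxz hconj
      ⟨2 ^ j, by ring⟩ (by rwa [← pow_succ'])
  have hg1 : g ≠ 1 := fun h => hgV 1 one_pos (by norm_num) (by simp [h, one_mem])
  exact ⟨orderOf_eq_prime hgm hg1,
    nonempty_mulEquiv_dihedralGroup_four hz hz2 hz1 hx2 hgm hconj hgen⟩
end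

section
/- Let G be a group with central element z of order 2, element x of order 2 with x ∉ ⟨z⟩, and an element g with xgx⁻¹ = gz and g^m = z where m is a power of 2 and the image of g generates the cyclic quotient G/⟨x,z⟩ of order m. Then G is a semidirect product (ℤ/2m) : (ℤ/2) where the involution x acts on the cyclic group ⟨g⟩ of order 2m by g ↦ g^{m+1}. -/
/-!
The relation `x g x⁻¹ = g ^ (m + 1)` lets `x` be moved past powers of `g`, and `z = g ^ m` is
itself a power of `g`; hence the right cosets of `⟨x, z⟩` by powers of `g`, which cover `G`,
consist of elements `g ^ k` and `g ^ k * x`. Conjugating by such elements sends `g` to `g` or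
`g ^ (m + 1)`, so `⟨g⟩` is normal; `x ∉ ⟨g⟩` because `x` does not commute with `g`; and since
`m` is a power of 2 with `g ^ m = z ≠ 1 = g ^ (2 * m)`, the order of `g` is `2 * m`.
-/

section

variable {G : Type*} [Group G] {x g : G}

theorem mul_zpow_eq_zpow_mul_of_conj {r : ℤ} (h : x * g * x⁻¹ = g ^ r) (k : ℤ) :
    x * g ^ k = g ^ (r * k) * x := by
  rw [zpow_mul, ← h, conj_zpow, inv_mul_cancel_right]

namespace Subgroup

theorem notMem_zpowers_of_conj_ne (h : x * g * x⁻¹ ≠ g) : x ∉ zpowers g := by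
  rintro ⟨j, rfl⟩
  exact h (by rw [(Commute.zpow_self g j).eq, mul_inv_cancel_right])

theorem zpowers_normal_of_conj_mem (h : ∀ a : G, a * g * a⁻¹ ∈ zpowers g) :
    (zpowers g).Normal where
  conj_mem n hn a := by
    obtain ⟨j, rfl⟩ := mem_zpowers_iff.mp hn
    rw [← conj_zpow]
    exact zpow_mem (h a) j

theorem zpowers_normal_of_conj_eq_zpow {r : ℤ} (hconj : x * g * x⁻¹ = g ^ r)
    (hG : ∀ a : G, (∃ k : ℤ, a = g ^ k) ∨ (∃ k : ℤ, a = g ^ k * x)) :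
    (zpowers g).Normal := by
  refine zpowers_normal_of_conj_mem fun a => ?_
  rcases hG a with ⟨k, rfl⟩ | ⟨k, rfl⟩
  · rw [(Commute.zpow_self g k).eq, mul_inv_cancel_right]
    exact mem_zpowers g
  · rw [show g ^ k * x * g * (g ^ k * x)⁻¹ = g ^ k * (x * g * x⁻¹) * (g ^ k)⁻¹ by group,
      hconj, (Commute.zpow_zpow_self g k r).eq, mul_inv_cancel_right]
    exact zpow_mem_zpowers g r

theorem zpow_or_zpow_mul_of_mem_closure_pair {y h : G} (hx : x * x = 1)
    (hy : y ∈ zpowers g) (hxy : Commute x y) (hh : h ∈ closure {x, y}) :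
    (∃ k : ℤ, h = g ^ k) ∨ (∃ k : ℤ, h = g ^ k * x) := by
  obtain ⟨n, rfl⟩ := mem_zpowers_iff.mp hy
  have mul_x : ∀ a : G, ((∃ k : ℤ, a = g ^ k) ∨ (∃ k : ℤ, a = g ^ k * x)) →
      (∃ k : ℤ, a * x = g ^ k) ∨ (∃ k : ℤ, a * x = g ^ k * x) := by
    rintro a (⟨k, rfl⟩ | ⟨k, rfl⟩)
    · exact .inr ⟨k, rfl⟩
    · exact .inl ⟨k, by rw [mul_assoc, hx, mul_one]⟩
  have mul_y : ∀ (a : G) (i : ℤ), ((∃ k : ℤ, a = g ^ k) ∨ (∃ k : ℤ, a = g ^ k * x)) →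
      (∃ k : ℤ, a * (g ^ n) ^ i = g ^ k) ∨ (∃ k : ℤ, a * (g ^ n) ^ i = g ^ k * x) := by
    rintro a i (⟨k, rfl⟩ | ⟨k, rfl⟩)
    · exact .inl ⟨k + n * i, by rw [← zpow_mul, zpow_add]⟩
    · exact .inr ⟨k + n * i, by rw [mul_assoc, (hxy.zpow_right i).eq, ← mul_assoc,
        ← zpow_mul, zpow_add]⟩
  induction hh using closure_induction_right with
  | one => exact .inl ⟨0, (zpow_zero g).symm⟩
  | mul_right a _ b hb ih =>
    rcases hb with rfl | rfl
    · exact mul_x a ih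
    · simpa using mul_y a 1 ih
  | mul_inv_cancel a _ b hb ih =>
    rcases hb with rfl | rfl
    · rw [inv_eq_of_mul_eq_one_right hx]
      exact mul_x a ih
    · simpa using mul_y a (-1) ih

theorem zpow_or_zpow_mul_of_mul_zpow_inv_mem_closure_pair {y a : G} {r i : ℤ}
    (hx : x * x = 1) (hy : y ∈ zpowers g) (hxy : Commute x y) (hconj : x * g * x⁻¹ = g ^ r)
    (ha : a * (g ^ i)⁻¹ ∈ closure {x, y}) :
    (∃ k : ℤ, a = g ^ k) ∨ (∃ k : ℤ, a = g ^ k * x) := by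
  rcases zpow_or_zpow_mul_of_mem_closure_pair hx hy hxy ha with ⟨k, hk⟩ | ⟨k, hk⟩
  · exact .inl ⟨k + i, by rw [zpow_add, ← hk, inv_mul_cancel_right]⟩
  · exact .inr ⟨k + r * i, by rw [zpow_add, mul_assoc, ← mul_zpow_eq_zpow_mul_of_conj hconj,
      ← mul_assoc, ← hk, inv_mul_cancel_right]⟩

end Subgroup

end

theorem semidirect_of_conj_relation_and_gm_eq_z_general
    {G : Type*} [Group G] (x z g : G) (m : ℕ)
    (hmpow : ∃ k : ℕ, m = 2 ^ k)
    (hz : z ∈ Subgroup.center G) (hzo : orderOf z = 2)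
    (hxo : orderOf x = 2)
    (hgen : ∀ a : G, ∃ k : ℤ, a * (g ^ k)⁻¹ ∈ Subgroup.closure ({x, z} : Set G))
    (hconj : x * g * x⁻¹ = g * z) (hgm : g ^ m = z) :
    orderOf g = 2 * m ∧
      (Subgroup.zpowers g).Normal ∧
      x ∉ Subgroup.zpowers g ∧
      x * g * x⁻¹ = g ^ (m + 1) ∧
      (∀ a : G, (∃ k : ℤ, a = g ^ k) ∨ (∃ k : ℤ, a = g ^ k * x)) := by
  have hz1 : z ≠ 1 := by rintro rfl; simp at hzo
  have hx2 : x * x = 1 := by rw [← sq, ← hxo, pow_orderOf_eq_one]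
  have hzg : z ∈ Subgroup.zpowers g := hgm ▸ Subgroup.npow_mem_zpowers g m
  have hconj' : x * g * x⁻¹ = g ^ (m + 1) := by rw [hconj, pow_succ', hgm]
  have hconjz : x * g * x⁻¹ = g ^ ((m : ℤ) + 1) := by
    rw [hconj', ← zpow_natCast, Nat.cast_succ]
  have hclass : ∀ a : G, (∃ k : ℤ, a = g ^ k) ∨ (∃ k : ℤ, a = g ^ k * x) := by
    intro a
    obtain ⟨i, hi⟩ := hgen a
    exact Subgroup.zpow_or_zpow_mul_of_mul_zpow_inv_mem_closure_pair hx2 hzg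
      (Subgroup.mem_center_iff.mp hz x) hconjz hi
  refine ⟨?_, Subgroup.zpowers_normal_of_conj_eq_zpow hconjz hclass,
    Subgroup.notMem_zpowers_of_conj_ne (by simpa [hconj] using hz1), hconj', hclass⟩
  obtain ⟨k, rfl⟩ := hmpow
  rw [← pow_succ', orderOf_eq_prime_pow (p := 2) (by rwa [hgm])]
  rw [pow_succ, pow_mul, hgm, ← hzo, pow_orderOf_eq_one]

/-- Let `G` be a group with a central element `z` of order 2, an element `x` of order 2 with
`x ∉ ⟨z⟩`, and an element `g` with `x * g * x⁻¹ = g * z` and `g ^ m = z`, where `m` is a power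
of 2 and the image of `g` generates the cyclic quotient `G / ⟨x, z⟩` of order `m`.  Then `G` is
the semidirect product `(ℤ/2m) : (ℤ/2)`, i.e. `g` has order `2m`, every element of `G` is of the
form `g ^ k` or `g ^ k * x`, `x ∉ ⟨g⟩` has order 2, and the involution `x` acts on the cyclic
group `⟨g⟩` of order `2m` by `g ↦ g ^ (m + 1)`. -/
theorem semidirect_of_conj_relation_and_gm_eq_z
    {G : Type*} [Group G] (x z g : G) (m : ℕ)
    (hm2 : 2 ≤ m) (hmpow : ∃ k : ℕ, m = 2 ^ k)
    (hz : z ∈ Subgroup.center G) (hzo : orderOf z = 2)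
    (hxo : orderOf x = 2) (hxz : x ∉ Subgroup.zpowers z)
    (hnorm : (Subgroup.closure ({x, z} : Set G)).Normal)
    (hgen : ∀ a : G, ∃ k : ℤ, a * (g ^ k)⁻¹ ∈ Subgroup.closure ({x, z} : Set G))
    (hcard : Nat.card (G ⧸ Subgroup.closure ({x, z} : Set G)) = m)
    (hconj : x * g * x⁻¹ = g * z) (hgm : g ^ m = z) :
    orderOf g = 2 * m ∧
      (Subgroup.zpowers g).Normal ∧
      x ∉ Subgroup.zpowers g ∧
      x * g * x⁻¹ = g ^ (m + 1) ∧
      (∀ a : G, (∃ k : ℤ, a = g ^ k) ∨ (∃ k : ℤ, a = g ^ k * x)) :=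
  semidirect_of_conj_relation_and_gm_eq_z_general x z g m hmpow hz hzo hxo hgen hconj hgm
end
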